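/- Fix 1/2 < α < 1, κ₀ > 0, λ ∈ ℝ, and v₀ ∈ (0,1). With γ_σ(v, w, t) as defined below, there is a constant c depending only on α, κ₀ and v₀ such that for all cutoffs 0 < σ ≤ σ′ ≤ κ₀, all w, w′ ∈ ℝ³, every v ∈ ℝ³ with |v| ≤ v₀, and every t with 1 ≤ t ≤ (κ₀/σ′)^{1/α}: |γ_{σ′}(v, w′, t) − γ_σ(v, w, t)| ≤ c λ² ( σ′ t + |w − w′| · t^{2(1−α)} ). -/

import Mathlib

open scoped RealInnerProductSpace

/-- The unit vector `e(θ,φ) = (sinθ cosφ, sinθ sinφ, cosθ)` on the sphere. -/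
noncomputable def sphDir (θ φ : ℝ) : EuclideanSpace ℝ (Fin 3) :=
  !₂[Real.sin θ * Real.cos φ, Real.sin θ * Real.sin φ, Real.cos θ]

/-- The Dollard phase `γ_σ(v, w, t)` of the paper (with slow cutoff `σ_τ^S = κ₀ τ^{-α}`
and `t_σ = min(t, (κ₀/σ)^{1/α})`), with `w` in place of `∇E_{2,p,σ}` and `v` the cell
velocity. -/
noncomputable def gammaPhase (α κ₀ lam σ : ℝ) (v w : EuclideanSpace ℝ (Fin 3)) (t : ℝ) : ℝ :=
  -(lam ^ 2) * ∫ τ in (1:ℝ)..(min t ((κ₀ / σ) ^ (1 / α))),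
      ∫ r in σ..(κ₀ * τ ^ (-α)),
        ∫ φ in (0:ℝ)..(2 * Real.pi),
          ∫ θ in (0:ℝ)..Real.pi,
            Real.cos (r * τ * (⟪sphDir θ φ, w⟫ - 1)) / (1 - ⟪sphDir θ φ, v⟫) *
              Real.sin θ

/-!
The denominator satisfies `1 - ⟪e, v⟫ ≥ 1 - v₀`, so the angular integral `A(w, s)` (with
`s = rτ`) is bounded by `C = 2π² / (1 - v₀)` and, cos being 1-Lipschitz, depends on `w` with
Lipschitz constant `C |s|`. For `t ≤ (κ₀/σ')^{1/α}` both upper limits `t_σ`, `t_{σ'}` equal `t`,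
and for `τ ≤ t` the slow cutoff `K = κ₀ τ^{-α}` is at least `σ'`. Splitting
`[σ, K] = [σ, σ'] ∪ [σ', K]`, the radial integrals differ by at most
`C σ' + C K τ ‖w' - w‖ K = C σ' + C κ₀² ‖w' - w‖ τ^{1-2α}`, and integrating over `τ ∈ [1, t]`
(where `1 - 2α > -1`) gives `C σ' t + C κ₀² / (2(1 - α)) ‖w' - w‖ t^{2(1-α)}`.
-/

open Real MeasureTheory Set

section IteratedIntegral

variable {f g : ℝ → ℝ → ℝ} {M : ℝ}

theorem abs_intervalIntegral_intervalIntegral_le (h : ∀ x y, |f x y| ≤ M) (a b c d : ℝ) :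
    |∫ y in a..b, ∫ x in c..d, f x y| ≤ M * |d - c| * |b - a| := by
  simp only [← Real.norm_eq_abs] at h ⊢
  exact intervalIntegral.norm_integral_le_of_norm_le_const fun y _ =>
    intervalIntegral.norm_integral_le_of_norm_le_const fun x _ => h x y

theorem abs_intervalIntegral_intervalIntegral_sub_le (hf : Continuous fun p : ℝ × ℝ => f p.1 p.2)
    (hg : Continuous fun p : ℝ × ℝ => g p.1 p.2) (h : ∀ x y, |f x y - g x y| ≤ M) (a b c d : ℝ) :
    |(∫ y in a..b, ∫ x in c..d, f x y) - ∫ y in a..b, ∫ x in c..d, g x y|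
      ≤ M * |d - c| * |b - a| := by
  have hinner (y : ℝ) : (∫ x in c..d, f x y) - ∫ x in c..d, g x y = ∫ x in c..d, f x y - g x y :=
    (intervalIntegral.integral_sub (Continuous.intervalIntegrable (by fun_prop) _ _)
      (Continuous.intervalIntegrable (by fun_prop) _ _)).symm
  rw [← intervalIntegral.integral_sub (Continuous.intervalIntegrable (by fun_prop) _ _)
    (Continuous.intervalIntegrable (by fun_prop) _ _)]
  simp_rw [hinner]
  exact abs_intervalIntegral_intervalIntegral_le h a b c d

end IteratedIntegral

theorem abs_intervalIntegral_sub_intervalIntegral_le {f g : ℝ → ℝ} {a b c C M : ℝ}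
    (hab : a ≤ b) (hbc : b ≤ c) (hf : IntervalIntegrable f volume a b)
    (hf' : IntervalIntegrable f volume b c) (hg : IntervalIntegrable g volume b c)
    (hfC : ∀ x, |f x| ≤ C) (hgf : ∀ x ∈ Icc b c, |g x - f x| ≤ M) :
    |(∫ x in b..c, g x) - ∫ x in a..c, f x| ≤ C * (b - a) + M * (c - b) := by
  rw [← intervalIntegral.integral_add_adjacent_intervals hf hf',
    show ∀ p q s : ℝ, p - (q + s) = (p - s) - q by intros; ring,
    ← intervalIntegral.integral_sub hg hf']
  have hgf' : ∀ x ∈ uIoc b c, ‖g x - f x‖ ≤ M := fun x hx =>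
    hgf x (Ioc_subset_Icc_self (uIoc_of_le hbc ▸ hx))
  calc _ ≤ ‖∫ x in b..c, g x - f x‖ + ‖∫ x in a..b, f x‖ := abs_sub _ _
    _ ≤ M * |c - b| + C * |b - a| :=
        add_le_add (intervalIntegral.norm_integral_le_of_norm_le_const hgf')
          (intervalIntegral.norm_integral_le_of_norm_le_const fun x _ => hfC x)
    _ = C * (b - a) + M * (c - b) := by
        rw [abs_of_nonneg (sub_nonneg.2 hab), abs_of_nonneg (sub_nonneg.2 hbc)]; ring

theorem integral_rpow_from_one_le {p : ℝ} (hp : -1 < p) (t : ℝ) :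
    ∫ τ in (1 : ℝ)..t, τ ^ p ≤ t ^ (p + 1) / (p + 1) := by
  rw [integral_rpow (Or.inl hp), Real.one_rpow]
  gcongr
  · linarith
  · exact sub_le_self _ zero_le_one

section SlowCutoff

variable {α κ₀ σ τ : ℝ}

theorem le_mul_rpow_neg_of_le_rpow_one_div (hα : 0 < α) (hκ₀ : 0 < κ₀) (hσ : 0 < σ)
    (hτ : 0 < τ) (h : τ ≤ (κ₀ / σ) ^ (1 / α)) : σ ≤ κ₀ * τ ^ (-α) := by
  rw [one_div, Real.le_rpow_inv_iff_of_pos hτ.le (by positivity) hα, le_div_iff₀ hσ] at h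
  rw [rpow_neg hτ.le, ← div_eq_mul_inv, le_div_iff₀ (rpow_pos_of_pos hτ α)]
  linarith

theorem mul_sq_mul_rpow_neg (hτ : 0 < τ) :
    τ * (κ₀ * τ ^ (-α)) ^ 2 = κ₀ ^ 2 * τ ^ (1 - 2 * α) := by
  rw [two_mul, sub_add_eq_sub_sub, sub_eq_add_neg, sub_eq_add_neg, rpow_add hτ, rpow_add hτ,
    rpow_one]
  ring

end SlowCutoff

theorem norm_sphDir (θ φ : ℝ) : ‖sphDir θ φ‖ = 1 := by
  have h : (sin θ * cos φ) ^ 2 + (sin θ * sin φ) ^ 2 + cos θ ^ 2 = 1 := by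
    linear_combination sin θ ^ 2 * sin_sq_add_cos_sq φ + sin_sq_add_cos_sq θ
  simp [sphDir, EuclideanSpace.norm_eq, Fin.sum_univ_three, h]

theorem continuous_sphDir : Continuous fun p : ℝ × ℝ => sphDir p.1 p.2 := by
  unfold sphDir
  fun_prop

theorem abs_inner_sphDir_le (θ φ : ℝ) (v : EuclideanSpace ℝ (Fin 3)) :
    |⟪sphDir θ φ, v⟫| ≤ ‖v‖ := by
  simpa [norm_sphDir] using abs_real_inner_le_norm (sphDir θ φ) v

noncomputable def phaseKernel (v w : EuclideanSpace ℝ (Fin 3)) (s θ φ : ℝ) : ℝ :=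
  cos (s * (⟪sphDir θ φ, w⟫ - 1)) / (1 - ⟪sphDir θ φ, v⟫) * sin θ

noncomputable def angularPart (v w : EuclideanSpace ℝ (Fin 3)) (s : ℝ) : ℝ :=
  ∫ φ in (0 : ℝ)..2 * π, ∫ θ in (0 : ℝ)..π, phaseKernel v w s θ φ

noncomputable def radialPart (α κ₀ σ : ℝ) (v w : EuclideanSpace ℝ (Fin 3)) (τ : ℝ) : ℝ :=
  ∫ r in σ..κ₀ * τ ^ (-α), angularPart v w (r * τ)

theorem gammaPhase_eq_integral_radialPart (α κ₀ lam σ : ℝ) (v w : EuclideanSpace ℝ (Fin 3))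
    (t : ℝ) : gammaPhase α κ₀ lam σ v w t =
      -(lam ^ 2) * ∫ τ in (1 : ℝ)..min t ((κ₀ / σ) ^ (1 / α)), radialPart α κ₀ σ v w τ :=
  rfl

section Kernel

variable {v₀ : ℝ} {v : EuclideanSpace ℝ (Fin 3)}

theorem one_sub_le_one_sub_inner_sphDir (hv : ‖v‖ ≤ v₀) (θ φ : ℝ) :
    1 - v₀ ≤ 1 - ⟪sphDir θ φ, v⟫ := by
  linarith [(abs_le.1 ((abs_inner_sphDir_le θ φ v).trans hv)).2]

theorem abs_sin_div_one_sub_inner_sphDir_le (hv : ‖v‖ ≤ v₀) (hv₀ : v₀ < 1) (θ φ : ℝ) :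
    |sin θ / (1 - ⟪sphDir θ φ, v⟫)| ≤ (1 - v₀)⁻¹ := by
  have hden := one_sub_le_one_sub_inner_sphDir hv θ φ
  rw [abs_div, abs_of_pos (a := 1 - _) (by linarith), inv_eq_one_div]
  exact div_le_div₀ zero_le_one (abs_sin_le_one θ) (by linarith) hden

theorem continuous_phaseKernel (hv : ‖v‖ < 1) (w : EuclideanSpace ℝ (Fin 3)) :
    Continuous fun p : ℝ × ℝ × ℝ => phaseKernel v w p.1 p.2.1 p.2.2 := by
  have he : Continuous fun p : ℝ × ℝ × ℝ => sphDir p.2.1 p.2.2 :=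
    continuous_sphDir.comp continuous_snd
  have hden (p : ℝ × ℝ × ℝ) : 1 - ⟪sphDir p.2.1 p.2.2, v⟫ ≠ 0 :=
    (sub_pos.2 hv |>.trans_le (one_sub_le_one_sub_inner_sphDir le_rfl _ _)).ne'
  unfold phaseKernel
  fun_prop (disch := exact hden _)

theorem abs_phaseKernel_le (hv : ‖v‖ ≤ v₀) (hv₀ : v₀ < 1) (w : EuclideanSpace ℝ (Fin 3))
    (s θ φ : ℝ) : |phaseKernel v w s θ φ| ≤ (1 - v₀)⁻¹ := by
  rw [phaseKernel, div_mul_eq_mul_div, mul_div_assoc, abs_mul]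
  calc _ ≤ 1 * (1 - v₀)⁻¹ := by
        gcongr
        exacts [abs_cos_le_one _, abs_sin_div_one_sub_inner_sphDir_le hv hv₀ θ φ]
    _ = (1 - v₀)⁻¹ := one_mul _

theorem abs_phaseKernel_sub_le (hv : ‖v‖ ≤ v₀) (hv₀ : v₀ < 1) (w w' : EuclideanSpace ℝ (Fin 3))
    (s θ φ : ℝ) :
    |phaseKernel v w' s θ φ - phaseKernel v w s θ φ| ≤ |s| * ‖w' - w‖ * (1 - v₀)⁻¹ := by
  have hcos : |cos (s * (⟪sphDir θ φ, w'⟫ - 1)) - cos (s * (⟪sphDir θ φ, w⟫ - 1))|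
      ≤ |s| * ‖w' - w‖ := by
    calc _ ≤ |s * (⟪sphDir θ φ, w'⟫ - 1) - s * (⟪sphDir θ φ, w⟫ - 1)| := abs_cos_sub_cos_le _ _
      _ = |s| * |⟪sphDir θ φ, w' - w⟫| := by rw [inner_sub_right, ← abs_mul]; ring_nf
      _ ≤ |s| * ‖w' - w‖ := by gcongr; exact abs_inner_sphDir_le θ φ _
  rw [phaseKernel, phaseKernel, ← sub_mul, ← sub_div, div_mul_eq_mul_div, mul_div_assoc, abs_mul]
  exact mul_le_mul hcos (abs_sin_div_one_sub_inner_sphDir_le hv hv₀ θ φ) (abs_nonneg _)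
    (by positivity)

end Kernel

section Angular

variable {v₀ : ℝ} {v : EuclideanSpace ℝ (Fin 3)}

theorem continuous_angularPart (hv : ‖v‖ < 1) (w : EuclideanSpace ℝ (Fin 3)) :
    Continuous (angularPart v w) := by
  have := continuous_phaseKernel hv w
  unfold angularPart
  fun_prop

theorem abs_angularPart_le (hv : ‖v‖ ≤ v₀) (hv₀ : v₀ < 1) (w : EuclideanSpace ℝ (Fin 3))
    (s : ℝ) : |angularPart v w s| ≤ 2 * π ^ 2 / (1 - v₀) := by
  unfold angularPart
  calc _ ≤ (1 - v₀)⁻¹ * |π - 0| * |2 * π - 0| :=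
        abs_intervalIntegral_intervalIntegral_le (abs_phaseKernel_le hv hv₀ w s) _ _ _ _
    _ = 2 * π ^ 2 / (1 - v₀) := by
        rw [sub_zero, sub_zero, abs_of_pos pi_pos, abs_of_pos two_pi_pos]; ring

theorem abs_angularPart_sub_le (hv : ‖v‖ ≤ v₀) (hv₀ : v₀ < 1) (w w' : EuclideanSpace ℝ (Fin 3))
    (s : ℝ) : |angularPart v w' s - angularPart v w s|
      ≤ 2 * π ^ 2 / (1 - v₀) * (|s| * ‖w' - w‖) := by
  have hu : ‖v‖ < 1 := hv.trans_lt hv₀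
  have hk (u : EuclideanSpace ℝ (Fin 3)) :
      Continuous fun p : ℝ × ℝ => phaseKernel v u s p.1 p.2 := by
    have := continuous_phaseKernel hu u
    fun_prop
  unfold angularPart
  calc _ ≤ |s| * ‖w' - w‖ * (1 - v₀)⁻¹ * |π - 0| * |2 * π - 0| :=
        abs_intervalIntegral_intervalIntegral_sub_le (hk w') (hk w)
          (abs_phaseKernel_sub_le hv hv₀ w w' s) _ _ _ _
    _ = 2 * π ^ 2 / (1 - v₀) * (|s| * ‖w' - w‖) := by
        rw [sub_zero, sub_zero, abs_of_pos pi_pos, abs_of_pos two_pi_pos]; ring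

end Angular

theorem continuousOn_intervalIntegral_comp_mul {A b : ℝ → ℝ} {s : Set ℝ} (hA : Continuous A)
    (hb : ContinuousOn b s) (a : ℝ) : ContinuousOn (fun τ => ∫ r in a..b τ, A (r * τ)) s := by
  have hf : Continuous fun q : (ℝ × ℝ) × ℝ => A (q.2 * q.1.1) := by fun_prop
  have hG : Continuous fun p : ℝ × ℝ => ∫ r in a..p.2, A (r * p.1) :=
    intervalIntegral.continuous_parametric_intervalIntegral_of_continuous (μ := volume)
      (f := fun p r => A (r * p.1)) hf continuous_snd
  exact hG.comp_continuousOn (continuousOn_id.prodMk hb)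

section Radial

variable {α κ₀ σ σ' v₀ : ℝ} {v : EuclideanSpace ℝ (Fin 3)}

theorem continuousOn_radialPart (hv : ‖v‖ < 1) (w : EuclideanSpace ℝ (Fin 3)) :
    ContinuousOn (radialPart α κ₀ σ v w) (Ioi 0) :=
  continuousOn_intervalIntegral_comp_mul (continuous_angularPart hv w)
    (continuousOn_const.mul (continuousOn_id.rpow_const fun _ hτ => Or.inl (ne_of_gt hτ))) σ

theorem abs_radialPart_sub_le (hv : ‖v‖ ≤ v₀) (hv₀ : v₀ < 1) (w w' : EuclideanSpace ℝ (Fin 3))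
    (hσ : 0 ≤ σ) (hσσ' : σ ≤ σ') {τ : ℝ} (hτ : 0 < τ) (hK : σ' ≤ κ₀ * τ ^ (-α)) :
    |radialPart α κ₀ σ' v w' τ - radialPart α κ₀ σ v w τ|
      ≤ 2 * π ^ 2 / (1 - v₀) * (σ' + κ₀ ^ 2 * ‖w' - w‖ * τ ^ (1 - 2 * α)) := by
  set K := κ₀ * τ ^ (-α)
  set C := 2 * π ^ 2 / (1 - v₀)
  have hC : 0 ≤ C := div_nonneg (by positivity) (by linarith)
  have hA (u : EuclideanSpace ℝ (Fin 3)) (a b : ℝ) :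
      IntervalIntegrable (fun r => angularPart v u (r * τ)) volume a b :=
    ((continuous_angularPart (hv.trans_lt hv₀) u).comp (continuous_mul_const τ)).intervalIntegrable
      _ _
  have hsub (r : ℝ) (hr : r ∈ Icc σ' K) :
      |angularPart v w' (r * τ) - angularPart v w (r * τ)| ≤ C * (K * τ * ‖w' - w‖) := by
    refine (abs_angularPart_sub_le hv hv₀ w w' _).trans ?_
    rw [abs_of_nonneg (mul_nonneg (hσ.trans (hσσ'.trans hr.1)) hτ.le)]
    gcongr
    exact hr.2
  calc _ ≤ C * (σ' - σ) + C * (K * τ * ‖w' - w‖) * (K - σ') :=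
        abs_intervalIntegral_sub_intervalIntegral_le hσσ' hK (hA w _ _) (hA w _ _) (hA w' _ _)
          (fun r => abs_angularPart_le hv hv₀ w _) hsub
    _ ≤ C * σ' + C * (K * τ * ‖w' - w‖) * K := by
        have : 0 ≤ K := (hσ.trans hσσ').trans hK
        gcongr <;> linarith
    _ = C * (σ' + κ₀ ^ 2 * ‖w' - w‖ * τ ^ (1 - 2 * α)) := by
        have hK2 : τ * K ^ 2 = κ₀ ^ 2 * τ ^ (1 - 2 * α) := mul_sq_mul_rpow_neg hτ
        linear_combination C * ‖w' - w‖ * hK2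

theorem abs_integral_radialPart_sub_le (hα₀ : 0 < α) (hα₁ : α < 1) (hκ₀ : 0 < κ₀)
    (hv : ‖v‖ ≤ v₀) (hv₀ : v₀ < 1) (w w' : EuclideanSpace ℝ (Fin 3)) (hσ : 0 < σ)
    (hσσ' : σ ≤ σ') {t : ℝ} (ht : 1 ≤ t) (ht' : t ≤ (κ₀ / σ') ^ (1 / α)) :
    |(∫ τ in (1 : ℝ)..t, radialPart α κ₀ σ' v w' τ) - ∫ τ in (1 : ℝ)..t, radialPart α κ₀ σ v w τ|
      ≤ 2 * π ^ 2 / (1 - v₀) *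
        (σ' * t + κ₀ ^ 2 / (2 * (1 - α)) * ‖w' - w‖ * t ^ (2 * (1 - α))) := by
  set C := 2 * π ^ 2 / (1 - v₀)
  have hC : 0 ≤ C := div_nonneg (by positivity) (by linarith)
  have hI (s : ℝ) (u : EuclideanSpace ℝ (Fin 3)) :
      IntervalIntegrable (radialPart α κ₀ s v u) volume 1 t :=
    ((continuousOn_radialPart (hv.trans_lt hv₀) u).mono fun τ hτ =>
      zero_lt_one.trans_le (uIcc_of_le ht ▸ hτ).1).intervalIntegrable
  have hp : -1 < 1 - 2 * α := by linarith
  have hrpow : IntervalIntegrable (fun τ : ℝ => τ ^ (1 - 2 * α)) volume 1 t :=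
    intervalIntegral.intervalIntegrable_rpow' hp
  rw [← intervalIntegral.integral_sub (hI σ' w') (hI σ w), ← Real.norm_eq_abs]
  calc _ ≤ ∫ τ in (1 : ℝ)..t, C * (σ' + κ₀ ^ 2 * ‖w' - w‖ * τ ^ (1 - 2 * α)) := by
        refine intervalIntegral.norm_integral_le_of_norm_le ht (ae_of_all _ fun τ hτ => ?_)
          (((intervalIntegrable_const (c := σ')).add (hrpow.const_mul _)).const_mul _)
        have hτ0 : 0 < τ := zero_lt_one.trans hτ.1
        exact abs_radialPart_sub_le hv hv₀ w w' hσ.le hσσ' hτ0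
          (le_mul_rpow_neg_of_le_rpow_one_div hα₀ hκ₀ (hσ.trans_le hσσ') hτ0 (hτ.2.trans ht'))
    _ = C * (σ' * (t - 1) + κ₀ ^ 2 * ‖w' - w‖ * ∫ τ in (1 : ℝ)..t, τ ^ (1 - 2 * α)) := by
        rw [intervalIntegral.integral_const_mul,
          intervalIntegral.integral_add intervalIntegrable_const (hrpow.const_mul _),
          intervalIntegral.integral_const, intervalIntegral.integral_const_mul, smul_eq_mul,
          mul_comm σ']
    _ ≤ C * (σ' * t + κ₀ ^ 2 * ‖w' - w‖ * (t ^ (1 - 2 * α + 1) / (1 - 2 * α + 1))) := by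
        gcongr C * (?_ + _ * ?_)
        · linarith
        · exact integral_rpow_from_one_le hp t
    _ = C * (σ' * t + κ₀ ^ 2 / (2 * (1 - α)) * ‖w' - w‖ * t ^ (2 * (1 - α))) := by
        rw [show 1 - 2 * α + 1 = 2 * (1 - α) by ring]; ring

end Radial

theorem gammaPhase_cutoff_shift_general (α κ₀ v₀ : ℝ) (hα₁ : 1 / 2 < α) (hα₂ : α < 1)
    (hκ₀ : 0 < κ₀) (hv₀' : v₀ < 1) :
    ∃ c : ℝ, 0 < c ∧
      ∀ (lam σ σ' t : ℝ) (v w w' : EuclideanSpace ℝ (Fin 3)),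
        0 < σ → σ ≤ σ' → σ' ≤ κ₀ → ‖v‖ ≤ v₀ → 1 ≤ t → t ≤ (κ₀ / σ') ^ (1 / α) →
        |gammaPhase α κ₀ lam σ' v w' t - gammaPhase α κ₀ lam σ v w t|
          ≤ c * lam ^ 2 * (σ' * t + ‖w - w'‖ * t ^ (2 * (1 - α))) := by
  have hα : 0 < α := by linarith
  set C := 2 * π ^ 2 / (1 - v₀)
  set k := κ₀ ^ 2 / (2 * (1 - α))
  have hC : 0 < C := div_pos (by positivity) (by linarith)
  have hk : 0 ≤ k := div_nonneg (sq_nonneg _) (by linarith)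
  refine ⟨C * (1 + k), by positivity, fun lam σ σ' t v w w' hσ hσσ' _ hv ht ht' => ?_⟩
  have hσ' : 0 < σ' := hσ.trans_le hσσ'
  have ht_σ : t ≤ (κ₀ / σ) ^ (1 / α) :=
    ht'.trans (rpow_le_rpow (by positivity) (by gcongr) (by positivity))
  rw [gammaPhase_eq_integral_radialPart, gammaPhase_eq_integral_radialPart, min_eq_left ht',
    min_eq_left ht_σ, ← mul_sub, abs_mul, abs_neg, abs_pow, sq_abs, norm_sub_rev w]
  set X := σ' * t
  set Y := ‖w' - w‖ * t ^ (2 * (1 - α))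
  have hX : 0 ≤ X := by positivity
  have hY : 0 ≤ Y := mul_nonneg (norm_nonneg _) (by positivity)
  calc _ ≤ lam ^ 2 * (C * (X + k * Y)) := by
        rw [← mul_assoc k]
        gcongr
        exact abs_integral_radialPart_sub_le hα hα₂ hκ₀ hv hv₀' w w' hσ hσσ' ht ht'
    _ ≤ C * (1 + k) * lam ^ 2 * (X + Y) := by
        have : 0 ≤ lam ^ 2 * C * (k * X + Y) := by positivity
        linear_combination this

/-- Estimate (J.3) of Lemma J.5 ('phases-shift-cut-off'): for cutoffs `0 < σ ≤ σ' ≤ κ₀`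
and `1 ≤ t ≤ (κ₀/σ')^{1/α}`,
`|γ_{σ'}(v, w', t) - γ_σ(v, w, t)| ≤ c λ² (σ' t + |w - w'| t^{2(1-α)})`, with `c`
depending only on `α`, `κ₀`, `v₀`. -/
theorem gammaPhase_cutoff_shift (α κ₀ v₀ : ℝ) (hα₁ : 1 / 2 < α) (hα₂ : α < 1)
    (hκ₀ : 0 < κ₀) (hv₀ : 0 < v₀) (hv₀' : v₀ < 1) :
    ∃ c : ℝ, 0 < c ∧
      ∀ (lam σ σ' t : ℝ) (v w w' : EuclideanSpace ℝ (Fin 3)),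
        0 < σ → σ ≤ σ' → σ' ≤ κ₀ → ‖v‖ ≤ v₀ → 1 ≤ t → t ≤ (κ₀ / σ') ^ (1 / α) →
        |gammaPhase α κ₀ lam σ' v w' t - gammaPhase α κ₀ lam σ v w t|
          ≤ c * lam ^ 2 * (σ' * t + ‖w - w'‖ * t ^ (2 * (1 - α))) :=
  gammaPhase_cutoff_shift_general α κ₀ v₀ hα₁ hα₂ hκ₀ hv₀'
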